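/- arXiv:1803.07162 — 2 statements merged into one kernel-verified Lean document; each statement's English description precedes it below -/
import Mathlib

section
/- Let s : X → E be a section of a Hermitian vector bundle with |∇''s| ≤ κ|∇′s| pointwise for some κ ∈ (0,1) (κ-quasiholomorphic), and suppose s vanishes transversally. Then at each zero p of s, the image of ∇s(p) : T_pX → E_p is all of E_p and the kernel of ∇s(p) is a symplectic (in particular J-close-to-complex) subspace; concretely, for every v in the kernel of the complex-linear part ∇′s(p), |∇s(p)v| ≤ κ|∇′s(p)v| forces the real-linear map ∇s(p) to be injective on any complex line where ∇′s(p) is injective. -/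
/-!
If `A′v + A″v = 0` then `‖A′v‖ = ‖A″v‖ ≤ κ‖A′v‖`, so with `κ < 1` both parts vanish: the kernel of
`A = A′ + A″` is the intersection of the kernels of its complex-linear and antilinear parts. It is
therefore a complex subspace, and a complex subspace is symplectic for `ω₀(v, w) = Re⟨i·v, w⟩`,
since `ω₀(v, i·v) = ‖v‖²`.
-/

open Complex

theorem add_eq_zero_iff_of_norm_le_mul {F : Type*} [NormedAddCommGroup F] {κ : ℝ} (hκ : κ < 1)
    {a b : F} (hb : ‖b‖ ≤ κ * ‖a‖) : a + b = 0 ↔ a = 0 ∧ b = 0 := by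
  refine ⟨fun hab => ?_, fun ⟨ha, hb⟩ => by rw [ha, hb, add_zero]⟩
  have hba : b = -a := eq_neg_of_add_eq_zero_right hab
  rw [hba, norm_neg] at hb
  have ha : a = 0 := norm_le_zero_iff.mp (by nlinarith [norm_nonneg a])
  exact ⟨ha, by rw [hba, ha, neg_zero]⟩

section Quasiholomorphic

variable {E F : Type*} [AddCommGroup E] [Module ℂ E] [Module ℝ E]
  [NormedAddCommGroup F] [NormedSpace ℂ F]
  {A' : E →ₗ[ℂ] F} {A'' : E →ₗ[ℝ] F} {κ : ℝ}

theorem add_apply_I_smul_eq_zero_of_norm_le_mul (hanti : ∀ v, A'' (I • v) = -(I • A'' v)) (hκ : κ < 1)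
    (hbound : ∀ v, ‖A'' v‖ ≤ κ * ‖A' v‖) {v : E} (hv : A' v + A'' v = 0) :
    A' (I • v) + A'' (I • v) = 0 := by
  obtain ⟨hA', hA''⟩ := (add_eq_zero_iff_of_norm_le_mul hκ (hbound v)).mp hv
  rw [map_smul, hanti, hA', hA'', smul_zero, neg_zero, add_zero]

theorem add_smul_apply_ne_zero_of_norm_le_mul (hκ : κ < 1) (hbound : ∀ v, ‖A'' v‖ ≤ κ * ‖A' v‖)
    {v : E} (hv : A' v ≠ 0) {c : ℂ} (hc : c ≠ 0) : A' (c • v) + A'' (c • v) ≠ 0 := by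
  rw [Ne, add_eq_zero_iff_of_norm_le_mul hκ (hbound _), map_smul]
  exact fun h => smul_ne_zero hc hv h.1

end Quasiholomorphic

theorem re_inner_I_smul_self {E : Type*} [NormedAddCommGroup E] [InnerProductSpace ℂ E] (v : E) :
    (inner ℂ (I • v) (I • v)).re = ‖v‖ ^ 2 := by
  rw [← RCLike.re_eq_complex_re, inner_self_eq_norm_sq, norm_smul, norm_I, one_mul]

/-- Pointwise structure at a transverse zero of a `κ`-quasiholomorphic section.
At a zero `p` of a section `s` with `|∇″s| ≤ κ|∇′s|`, `κ ∈ (0,1)`, the intrinsic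
derivative `∇s(p) : T_pX → E_p` is modelled by `A = A′ + A″ : ℂⁿ → ℂ` with `A′`
complex-linear (`∇′s(p)`), `A″` antilinear (`∇″s(p)`), `|A″v| ≤ κ|A′v|`;
transversality of the zero means `A` is surjective (`hsurj`).  Conclusion: the
image of `∇s(p)` is all of `E_p`, its kernel is a symplectic subspace of
`(ℂⁿ,ω₀)` (`ω₀(v,w) = Re⟨i·v,w⟩`), and `∇s(p)` is injective on every complex
line on which `∇′s(p)` is injective. -/
theorem quasiholomorphic_transverse_zero_structure (n : ℕ)
    (A' : EuclideanSpace ℂ (Fin n) →ₗ[ℂ] ℂ)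
    (A'' : EuclideanSpace ℂ (Fin n) →ₗ[ℝ] ℂ)
    (hanti : ∀ v, A'' (Complex.I • v) = -(Complex.I * A'' v))
    (κ : ℝ) (hκ : κ ∈ Set.Ioo (0 : ℝ) 1)
    (hbound : ∀ v, ‖A'' v‖ ≤ κ * ‖A' v‖)
    (hsurj : Function.Surjective (fun v : EuclideanSpace ℂ (Fin n) => A' v + A'' v)) :
    (Set.range (fun v : EuclideanSpace ℂ (Fin n) => A' v + A'' v) = Set.univ) ∧
    (∀ v : EuclideanSpace ℂ (Fin n), A' v + A'' v = 0 → v ≠ 0 →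
      ∃ w : EuclideanSpace ℂ (Fin n), A' w + A'' w = 0 ∧
        ((inner ℂ (Complex.I • v) w : ℂ)).re ≠ 0) ∧
    (∀ v : EuclideanSpace ℂ (Fin n), A' v ≠ 0 →
      ∀ c : ℂ, c ≠ 0 → A' (c • v) + A'' (c • v) ≠ 0) := by
  have hκ1 : κ < 1 := hκ.2
  refine ⟨Set.range_eq_univ.mpr hsurj, fun v hv hv0 => ⟨I • v, ?_, ?_⟩,
    fun v hv c hc => add_smul_apply_ne_zero_of_norm_le_mul hκ1 hbound hv hc⟩
  · exact add_apply_I_smul_eq_zero_of_norm_le_mul (fun v => by rw [hanti, smul_eq_mul]) hκ1 hbound hv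
  · rw [re_inner_I_smul_self]
    exact pow_ne_zero 2 (norm_ne_zero_iff.mpr hv0)
end

section
/- Let A = A′ + A'' : ℂⁿ → ℂ be a surjective real-linear map where A′ is complex-linear, A'' is complex-antilinear, and |A''(v)| ≤ κ|A′(v)| for all v with κ ∈ (0,1). Then ker A is a symplectic subspace of (ℂⁿ, ω₀), where ω₀ is the standard symplectic form. -/
/-- Linear model for Donaldson hypersurfaces.  Let `A = A′ + A″ : ℂⁿ → ℂ` be a
surjective real-linear map, with `A′` complex-linear, `A″` complex-antilinear
(real-linear with `A″(i·v) = −i·A″(v)`), and `|A″(v)| ≤ κ|A′(v)|` for all `v`,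
`κ ∈ (0,1)`.  Then `ker A` is a symplectic subspace of `(ℂⁿ, ω₀)`, where
`ω₀(v,w) = Re⟨i·v, w⟩` is the standard symplectic form: `ω₀` restricted to
`ker A` is nondegenerate. -/
theorem kernel_of_quasiholomorphic_is_symplectic (n : ℕ)
    (A' : EuclideanSpace ℂ (Fin n) →ₗ[ℂ] ℂ)
    (A'' : EuclideanSpace ℂ (Fin n) →ₗ[ℝ] ℂ)
    (hanti : ∀ v, A'' (Complex.I • v) = -(Complex.I * A'' v))
    (κ : ℝ) (hκ : κ ∈ Set.Ioo (0 : ℝ) 1)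
    (hbound : ∀ v, ‖A'' v‖ ≤ κ * ‖A' v‖)
    (hsurj : Function.Surjective (fun v : EuclideanSpace ℂ (Fin n) => A' v + A'' v)) :
    ∀ v : EuclideanSpace ℂ (Fin n), A' v + A'' v = 0 → v ≠ 0 →
      ∃ w : EuclideanSpace ℂ (Fin n), A' w + A'' w = 0 ∧
        ((inner ℂ (Complex.I • v) w : ℂ)).re ≠ 0 := by
  intro v hv hv0
  -- From the bound, membership in ker A forces A' v = 0 and A'' v = 0.
  have h1 : A'' v = -(A' v) := by linear_combination hv
  have habs : ‖A' v‖ ≤ κ * ‖A' v‖ := by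
    have := hbound v
    rwa [h1, norm_neg] at this
  have hA' : A' v = 0 := by
    by_contra h
    have hpos : 0 < ‖A' v‖ := by
      simpa [norm_pos_iff] using h
    nlinarith [hκ.2, habs]
  have hA'' : A'' v = 0 := by rw [h1, hA', neg_zero]
  refine ⟨Complex.I • v, ?_, ?_⟩
  · rw [map_smul, hanti, hA', hA'', smul_zero, mul_zero, neg_zero, add_zero]
  · have hne : Complex.I • v ≠ 0 := smul_ne_zero Complex.I_ne_zero hv0
    have : (inner ℂ (Complex.I • v) (Complex.I • v) : ℂ) = (‖Complex.I • v‖ : ℂ) ^ 2 := by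
      exact_mod_cast inner_self_eq_norm_sq_to_K (𝕜 := ℂ) (Complex.I • v)
    rw [this]
    have : (0:ℝ) < ‖Complex.I • v‖ := norm_pos_iff.mpr hne
    rw [← Complex.ofReal_pow, Complex.ofReal_re]
    positivity
end
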